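/- arXiv:2601.09203 — 2 statements merged into one kernel-verified Lean document; each statement's English description precedes it below -/
import Mathlib

section
/- Let (Ω, μ) be a probability space, η_a, η_b, α_a, α_b real numbers, and f, f', g, g' : Ω → ℝ measurable functions with f(ω), f'(ω) ∈ [(1+η_a−|α_a|)/2, (1+η_a+|α_a|)/2] and g(ω), g'(ω) ∈ [(1+η_b−|α_b|)/2, (1+η_b+|α_b|)/2] for μ-almost every ω. Define B = ∫(f·g) dμ − ∫(f·g') dμ + ∫(f'·g) dμ + ∫(f'·g') dμ − (1+η_b)·∫f' dμ − (1+η_a)·∫g dμ + ((1+η_a)(1+η_b) − |α_a·α_b|)/2. Then −|α_a·α_b| ≤ B ≤ 0. -/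
/-!
Centering each response at the midpoint `(1 + η) / 2` of its interval turns the CH functional,
evaluated at the hidden-variable level, into `u (v - v') + u' (v + v') - |αa αb| / 2` with
`|u|, |u'| ≤ |αa| / 2` and `|v|, |v'| ≤ |αb| / 2`. Since `|v - v'| + |v + v'| = 2 max |v| |v'|`,
the CHSH-type term is at most `|αa αb| / 2` in absolute value, so the functional lies in
`[-|αa αb|, 0]` for every hidden variable. The functional is affine in the joint probabilities,
so averaging over the probability measure keeps it in this closed interval.
-/

open MeasureTheory Set

noncomputable def clauserHorne (ηa ηb αa αb Pab Pab' Pa'b Pa'b' Pa' Pb : ℝ) : ℝ :=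
  Pab - Pab' + Pa'b + Pa'b' - (1 + ηb) * Pa' - (1 + ηa) * Pb
    + ((1 + ηa) * (1 + ηb) - |αa * αb|) / 2

def responseInterval (η α : ℝ) : Set ℝ :=
  Icc ((1 + η - |α|) / 2) ((1 + η + |α|) / 2)

lemma abs_sub_add_abs_add_le {v v' D : ℝ} (hv : |v| ≤ D) (hv' : |v'| ≤ D) :
    |v - v'| + |v + v'| ≤ 2 * D := by
  rw [abs_le] at hv hv'
  cases abs_cases (v - v') <;> cases abs_cases (v + v') <;> linarith

lemma abs_chsh_le {A D u u' v v' : ℝ} (hu : |u| ≤ A) (hu' : |u'| ≤ A)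
    (hv : |v| ≤ D) (hv' : |v'| ≤ D) :
    |u * (v - v') + u' * (v + v')| ≤ 2 * A * D :=
  calc |u * (v - v') + u' * (v + v')|
      ≤ |u| * |v - v'| + |u'| * |v + v'| := by
        simpa only [abs_mul] using abs_add_le (u * (v - v')) (u' * (v + v'))
    _ ≤ A * |v - v'| + A * |v + v'| := by gcongr
    _ ≤ A * (2 * D) := by
        rw [← mul_add]
        exact mul_le_mul_of_nonneg_left (abs_sub_add_abs_add_le hv hv') ((abs_nonneg u).trans hu)
    _ = 2 * A * D := by ring

lemma abs_sub_center_le_of_mem_responseInterval {η α x : ℝ} (hx : x ∈ responseInterval η α) :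
    |x - (1 + η) / 2| ≤ |α| / 2 :=
  abs_le.2 ⟨by linarith [hx.1], by linarith [hx.2]⟩

lemma clauserHorne_mem_Icc {ηa ηb αa αb x x' y y' : ℝ}
    (hx : x ∈ responseInterval ηa αa) (hx' : x' ∈ responseInterval ηa αa)
    (hy : y ∈ responseInterval ηb αb) (hy' : y' ∈ responseInterval ηb αb) :
    clauserHorne ηa ηb αa αb (x * y) (x * y') (x' * y) (x' * y') x' y ∈ Icc (-|αa * αb|) 0 := by
  have hcentered : clauserHorne ηa ηb αa αb (x * y) (x * y') (x' * y) (x' * y') x' y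
      = (x - (1 + ηa) / 2) * ((y - (1 + ηb) / 2) - (y' - (1 + ηb) / 2))
        + (x' - (1 + ηa) / 2) * ((y - (1 + ηb) / 2) + (y' - (1 + ηb) / 2))
        - |αa| * |αb| / 2 := by
    rw [clauserHorne, abs_mul]; ring
  have hchsh := abs_le.1 <| abs_chsh_le
    (abs_sub_center_le_of_mem_responseInterval hx) (abs_sub_center_le_of_mem_responseInterval hx')
    (abs_sub_center_le_of_mem_responseInterval hy) (abs_sub_center_le_of_mem_responseInterval hy')
  rw [hcentered, abs_mul]
  constructor <;> linarith [hchsh.1, hchsh.2]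

section Integral

variable {Ω : Type*} [MeasurableSpace Ω] {μ : Measure Ω}

lemma integrable_clauserHorne [IsFiniteMeasure μ] (ηa ηb αa αb : ℝ)
    {Xab Xab' Xa'b Xa'b' Xa' Xb : Ω → ℝ} (hab : Integrable Xab μ) (hab' : Integrable Xab' μ)
    (ha'b : Integrable Xa'b μ) (ha'b' : Integrable Xa'b' μ) (ha' : Integrable Xa' μ)
    (hb : Integrable Xb μ) :
    Integrable (fun ω ↦
      clauserHorne ηa ηb αa αb (Xab ω) (Xab' ω) (Xa'b ω) (Xa'b' ω) (Xa' ω) (Xb ω)) μ := by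
  unfold clauserHorne
  fun_prop

lemma integral_clauserHorne [IsProbabilityMeasure μ] (ηa ηb αa αb : ℝ)
    {Xab Xab' Xa'b Xa'b' Xa' Xb : Ω → ℝ} (hab : Integrable Xab μ) (hab' : Integrable Xab' μ)
    (ha'b : Integrable Xa'b μ) (ha'b' : Integrable Xa'b' μ) (ha' : Integrable Xa' μ)
    (hb : Integrable Xb μ) :
    ∫ ω, clauserHorne ηa ηb αa αb (Xab ω) (Xab' ω) (Xa'b ω) (Xa'b' ω) (Xa' ω) (Xb ω) ∂μ
      = clauserHorne ηa ηb αa αb (∫ ω, Xab ω ∂μ) (∫ ω, Xab' ω ∂μ) (∫ ω, Xa'b ω ∂μ)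
          (∫ ω, Xa'b' ω ∂μ) (∫ ω, Xa' ω ∂μ) (∫ ω, Xb ω ∂μ) := by
  simp only [clauserHorne]
  rw [integral_add, integral_sub, integral_sub, integral_add, integral_add, integral_sub,
    integral_const_mul, integral_const_mul, integral_const, probReal_univ, one_smul]
  all_goals fun_prop

lemma clauserHorne_integral_mem [IsProbabilityMeasure μ] (ηa ηb αa αb : ℝ) {s : Set ℝ}
    (hs : Convex ℝ s) (hsc : IsClosed s) {Xab Xab' Xa'b Xa'b' Xa' Xb : Ω → ℝ}
    (hab : Integrable Xab μ) (hab' : Integrable Xab' μ) (ha'b : Integrable Xa'b μ)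
    (ha'b' : Integrable Xa'b' μ) (ha' : Integrable Xa' μ) (hb : Integrable Xb μ)
    (hmem : ∀ᵐ ω ∂μ,
      clauserHorne ηa ηb αa αb (Xab ω) (Xab' ω) (Xa'b ω) (Xa'b' ω) (Xa' ω) (Xb ω) ∈ s) :
    clauserHorne ηa ηb αa αb (∫ ω, Xab ω ∂μ) (∫ ω, Xab' ω ∂μ) (∫ ω, Xa'b ω ∂μ)
      (∫ ω, Xa'b' ω ∂μ) (∫ ω, Xa' ω ∂μ) (∫ ω, Xb ω ∂μ) ∈ s := by
  rw [← integral_clauserHorne ηa ηb αa αb hab hab' ha'b ha'b' ha' hb]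
  exact hs.integral_mem hsc hmem (integrable_clauserHorne ηa ηb αa αb hab hab' ha'b ha'b' ha' hb)

lemma memLp_top_of_ae_mem_responseInterval [IsFiniteMeasure μ] {η α : ℝ} {f : Ω → ℝ}
    (hf : Measurable f) (hfb : ∀ᵐ ω ∂μ, f ω ∈ responseInterval η α) : MemLp f ⊤ μ :=
  memLp_of_bounded hfb hf.aestronglyMeasurable ⊤

lemma integrable_mul_of_memLp_top [IsFiniteMeasure μ] {u v : Ω → ℝ} (hu : MemLp u ⊤ μ)
    (hv : MemLp v ⊤ μ) : Integrable (fun ω ↦ u ω * v ω) μ :=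
  (hv.mul hu).integrable le_top

end Integral

/-- Generalized Clauser–Horne inequality for a local hidden-variable model:
the hidden variable ranges over a probability space `(Ω, μ)`; `f, f'` (resp. `g, g'`)
are the local response probabilities of party A (resp. B), almost surely constrained
between the extreme eigenvalues of the biased unsharp POVM elements.  The generalized
CH functional built from the factorized joint probabilities lies in `[−|αa·αb|, 0]`. -/
theorem generalized_CH_lhv {Ω : Type*} [MeasurableSpace Ω] (μ : Measure Ω)
    [IsProbabilityMeasure μ] (ηa ηb αa αb : ℝ) (f f' g g' : Ω → ℝ)
    (hf : Measurable f) (hf' : Measurable f') (hg : Measurable g) (hg' : Measurable g')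
    (hfb : ∀ᵐ ω ∂μ, f ω ∈ Set.Icc ((1 + ηa - |αa|) / 2) ((1 + ηa + |αa|) / 2))
    (hfb' : ∀ᵐ ω ∂μ, f' ω ∈ Set.Icc ((1 + ηa - |αa|) / 2) ((1 + ηa + |αa|) / 2))
    (hgb : ∀ᵐ ω ∂μ, g ω ∈ Set.Icc ((1 + ηb - |αb|) / 2) ((1 + ηb + |αb|) / 2))
    (hgb' : ∀ᵐ ω ∂μ, g' ω ∈ Set.Icc ((1 + ηb - |αb|) / 2) ((1 + ηb + |αb|) / 2)) :
    -|αa * αb| ≤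
      (∫ ω, f ω * g ω ∂μ) - (∫ ω, f ω * g' ω ∂μ) + (∫ ω, f' ω * g ω ∂μ)
        + (∫ ω, f' ω * g' ω ∂μ) - (1 + ηb) * (∫ ω, f' ω ∂μ) - (1 + ηa) * (∫ ω, g ω ∂μ)
        + ((1 + ηa) * (1 + ηb) - |αa * αb|) / 2 ∧
    (∫ ω, f ω * g ω ∂μ) - (∫ ω, f ω * g' ω ∂μ) + (∫ ω, f' ω * g ω ∂μ)
        + (∫ ω, f' ω * g' ω ∂μ) - (1 + ηb) * (∫ ω, f' ω ∂μ) - (1 + ηa) * (∫ ω, g ω ∂μ)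
        + ((1 + ηa) * (1 + ηb) - |αa * αb|) / 2 ≤ 0 := by
  have hfL := memLp_top_of_ae_mem_responseInterval hf hfb
  have hf'L := memLp_top_of_ae_mem_responseInterval hf' hfb'
  have hgL := memLp_top_of_ae_mem_responseInterval hg hgb
  have hg'L := memLp_top_of_ae_mem_responseInterval hg' hgb'
  refine clauserHorne_integral_mem ηa ηb αa αb (convex_Icc _ _) isClosed_Icc
    (integrable_mul_of_memLp_top hfL hgL) (integrable_mul_of_memLp_top hfL hg'L)
    (integrable_mul_of_memLp_top hf'L hgL) (integrable_mul_of_memLp_top hf'L hg'L)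
    (hf'L.integrable le_top) (hgL.integrable le_top) ?_
  filter_upwards [hfb, hfb', hgb, hgb'] with ω hx hx' hy hy'
  exact clauserHorne_mem_Icc hx hx' hy hy'
end

section
/- Let α ∈ ℝ and β ∈ [0, 1]. Let X be a real random variable on a probability space taking values almost surely in the interval [−(3−β)·α²/2, (1−β)·α²/2], with mean m = E[X]. Then the fourth central moment satisfies E[(X − m)⁴] ≤ (2−β)⁴·α⁸/12. -/
/-! Since `t ↦ (t - m)⁴` is convex, on `[a, b]` it lies below its chord; integrating the chord
bound (the Edmundson–Madansky inequality) gives, with `m = E[X]`,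
`(b - a)·E[(X - m)⁴] ≤ (b - m)(a - m)⁴ + (m - a)(b - m)⁴`.
Writing `s = b - a` and `p = (m - a)(b - m)`, the right-hand side is `(s⁵ - s(s² - 6p)²)/12 ≤ s⁵/12`.
The interval of the theorem has length `(2 - β)α²`. -/

open MeasureTheory Set

theorem ConvexOn.sub_mul_le_chord {𝕜 : Type*} [Field 𝕜] [LinearOrder 𝕜] [IsStrictOrderedRing 𝕜]
    {s : Set 𝕜} {f : 𝕜 → 𝕜} (hf : ConvexOn 𝕜 s f) {a b x : 𝕜} (ha : a ∈ s) (hb : b ∈ s)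
    (hax : a ≤ x) (hxb : x ≤ b) : (b - a) * f x ≤ (b - x) * f a + (x - a) * f b := by
  rcases hax.eq_or_lt with rfl | hax
  · simp
  rcases hxb.eq_or_lt with rfl | hxb
  · simp
  exact hf.secant_mono_aux1 ha hb hax hxb

theorem ConvexOn.sub_mul_integral_comp_le_chord {Ω : Type*} [MeasurableSpace Ω]
    {μ : Measure Ω} [IsProbabilityMeasure μ] {f : ℝ → ℝ} {a b : ℝ} {X : Ω → ℝ}
    (hf : ConvexOn ℝ (Icc a b) f) (h : ∀ᵐ ω ∂μ, X ω ∈ Icc a b) (hX : AEMeasurable X μ)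
    (hfX : Integrable (fun ω ↦ f (X ω)) μ) :
    (b - a) * ∫ ω, f (X ω) ∂μ
      ≤ (b - ∫ ω, X ω ∂μ) * f a + (∫ ω, X ω ∂μ - a) * f b := by
  have hint : Integrable X μ := .of_mem_Icc a b hX h
  obtain ⟨ω₀, hω₀⟩ := h.exists
  have hab : a ≤ b := hω₀.1.trans hω₀.2
  have ha : a ∈ Icc a b := left_mem_Icc.2 hab
  have hb : b ∈ Icc a b := right_mem_Icc.2 hab
  rw [← integral_const_mul]
  calc ∫ ω, (b - a) * f (X ω) ∂μ
      ≤ ∫ ω, (b - X ω) * f a + (X ω - a) * f b ∂μ :=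
        integral_mono_ae (hfX.const_mul _) (by fun_prop)
          (h.mono fun ω hω ↦ hf.sub_mul_le_chord ha hb hω.1 hω.2)
    _ = (b - ∫ ω, X ω ∂μ) * f a + (∫ ω, X ω ∂μ - a) * f b := by
        rw [integral_add (by fun_prop) (by fun_prop), integral_mul_const, integral_mul_const,
          integral_sub (integrable_const _) hint, integral_sub hint (integrable_const _)]
        simp

theorem twelve_mul_chord_pow_four_le {a b : ℝ} (m : ℝ) (hab : a ≤ b) :
    12 * ((b - m) * (a - m) ^ 4 + (m - a) * (b - m) ^ 4) ≤ (b - a) ^ 5 := by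
  have key : (b - a) ^ 5 - 12 * ((b - m) * (a - m) ^ 4 + (m - a) * (b - m) ^ 4)
      = (b - a) * ((b - a) ^ 2 - 6 * (m - a) * (b - m)) ^ 2 := by ring
  rw [← sub_nonneg, key]
  exact mul_nonneg (sub_nonneg.2 hab) (sq_nonneg _)

theorem integral_sub_integral_pow_four_le {Ω : Type*} [MeasurableSpace Ω] {μ : Measure Ω}
    [IsProbabilityMeasure μ] {a b : ℝ} {X : Ω → ℝ} (h : ∀ᵐ ω ∂μ, X ω ∈ Icc a b)
    (hX : AEMeasurable X μ) :
    ∫ ω, (X ω - ∫ ω', X ω' ∂μ) ^ 4 ∂μ ≤ (b - a) ^ 4 / 12 := by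
  set m := ∫ ω', X ω' ∂μ
  obtain ⟨ω₀, hω₀⟩ := h.exists
  rcases (hω₀.1.trans hω₀.2).eq_or_lt with rfl | hab
  · have hXa : X =ᵐ[μ] fun _ ↦ a := h.mono fun ω hω ↦ le_antisymm hω.2 hω.1
    have hm : m = a := by simp [m, integral_congr_ae hXa]
    rw [integral_congr_ae (g := fun _ ↦ 0) (hXa.mono fun ω hω ↦ by simp [hω, hm])]
    simp
  have hconvex : ConvexOn ℝ (Icc a b) fun x ↦ (x - m) ^ 4 :=
    ((Even.convexOn_pow (n := 4) (by decide)).comp_affineMap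
      (AffineMap.id ℝ ℝ - AffineMap.const ℝ ℝ m)).subset (subset_univ _) (convex_Icc a b)
  have hint4 : Integrable (fun ω ↦ (X ω - m) ^ 4) μ := by
    simpa [Even.pow_abs ⟨2, rfl⟩] using
      ((memLp_of_bounded h hX.aestronglyMeasurable 4).sub (memLp_const m)).integrable_norm_pow
        four_ne_zero
  have hchord := hconvex.sub_mul_integral_comp_le_chord h hX hint4
  have hchord_le := twelve_mul_chord_pow_four_le m hab.le
  rw [le_div_iff₀ (by norm_num)]
  refine le_of_mul_le_mul_left ?_ (sub_pos.2 hab)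
  linarith

theorem modified_fourth_central_moment_bound_general {Ω : Type*} [MeasurableSpace Ω]
    (μ : Measure Ω) [IsProbabilityMeasure μ] (α β : ℝ)
    (X : Ω → ℝ) (hX : Measurable X)
    (hbound : ∀ᵐ ω ∂μ, X ω ∈ Set.Icc (-(3 - β) * α ^ 2 / 2) ((1 - β) * α ^ 2 / 2)) :
    (∫ ω, (X ω - ∫ ω', X ω' ∂μ) ^ 4 ∂μ) ≤ (2 - β) ^ 4 * α ^ 8 / 12 := by
  convert integral_sub_integral_pow_four_le hbound hX.aemeasurable using 1
  ring

/-- Timelike-background-modified fourth central moment bound: if a random variable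
(the generalized Clauser–Horne functional with spacelike fraction `β` and unsharpness
`α`) takes values a.s. in `[−(3−β)·α²/2, (1−β)·α²/2]`, then
`E[(X − m)⁴] ≤ (2−β)⁴·α⁸/12`. -/
theorem modified_fourth_central_moment_bound {Ω : Type*} [MeasurableSpace Ω]
    (μ : Measure Ω) [IsProbabilityMeasure μ] (α β : ℝ) (hβ : β ∈ Set.Icc (0 : ℝ) 1)
    (X : Ω → ℝ) (hX : Measurable X)
    (hbound : ∀ᵐ ω ∂μ, X ω ∈ Set.Icc (-(3 - β) * α ^ 2 / 2) ((1 - β) * α ^ 2 / 2)) :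
    (∫ ω, (X ω - ∫ ω', X ω' ∂μ) ^ 4 ∂μ) ≤ (2 - β) ^ 4 * α ^ 8 / 12 :=
  modified_fourth_central_moment_bound_general μ α β X hX hbound
end
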